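/- The fourth central moment of the bootstrap h-th sample moment about the true moment is of order O(1/m^2): E[(X̂_m − α_h)^4] = O(m^{-2}); in particular all O(1/m) terms cancel in the expansion. -/

import Mathlib

/-!
Write `Y_a = Z_a ^ h`, `Ȳ = m⁻¹ ∑_a Y_a`, and split
`X̂_m - α_h = m⁻¹ ∑_j (Y_{σ_j} - Ȳ) + m⁻¹ ∑_a (Y_a - α_h)` into resampling and sampling noise.
In both families a product of four terms in which one index occurs exactly once has mean zero:
for the sampling noise by independence of the sample, for the resampling noise because averaging
over the uniform index `σ_j`, which is independent of everything else, replaces `Y_{σ_j} - Ȳ` by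
`m⁻¹ ∑_a (Y_a - Ȳ) = 0`. Expanding the fourth power of either sum, only the `O(m²)` index tuples
without such a singleton survive, each bounded through AM-GM by fourth moments, so after the
factor `m⁻⁴` both contributions, and hence `E[(X̂_m - α_h)⁴]`, are `O(m⁻²)`.
-/

open MeasureTheory ProbabilityTheory Finset

lemma abs_prod_fin_four_le (x : Fin 4 → ℝ) : |∏ i, x i| ≤ (∑ i, x i ^ 4) / 4 := by
  rw [Fin.prod_univ_four, Fin.sum_univ_four]
  set a := x 0; set b := x 1; set c := x 2; set d := x 3
  have hab : |a * b| ≤ (a ^ 2 + b ^ 2) / 2 := by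
    rw [abs_le]; constructor <;> nlinarith [sq_nonneg (a + b), sq_nonneg (a - b)]
  have hcd : |c * d| ≤ (c ^ 2 + d ^ 2) / 2 := by
    rw [abs_le]; constructor <;> nlinarith [sq_nonneg (c + d), sq_nonneg (c - d)]
  calc |a * b * c * d| = |a * b| * |c * d| := by rw [mul_assoc, abs_mul]
    _ ≤ (a ^ 2 + b ^ 2) / 2 * ((c ^ 2 + d ^ 2) / 2) :=
      mul_le_mul hab hcd (abs_nonneg _) (by positivity)
    _ ≤ _ := by nlinarith [sq_nonneg (a ^ 2 - c ^ 2), sq_nonneg (a ^ 2 - d ^ 2),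
        sq_nonneg (b ^ 2 - c ^ 2), sq_nonneg (b ^ 2 - d ^ 2)]

lemma add_pow_four_le (a b : ℝ) : (a + b) ^ 4 ≤ 8 * a ^ 4 + 8 * b ^ 4 := by
  nlinarith [sq_nonneg (a - b), sq_nonneg (a + b), sq_nonneg (a ^ 2 - b ^ 2)]

lemma two_mul_card_image_le {α β : Type*} [Fintype α] [DecidableEq α] [DecidableEq β] (t : α → β)
    (ht : ∀ i, ∃ j ≠ i, t j = t i) : 2 * #(univ.image t) ≤ Fintype.card α := by
  refine mul_card_image_le_card _ 2 fun b hb => ?_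
  obtain ⟨i, -, rfl⟩ := mem_image.1 hb
  obtain ⟨j, hji, hj⟩ := ht i
  calc 2 = #{j, i} := (card_pair hji).symm
    _ ≤ _ := card_le_card fun k hk => by
      rcases mem_insert.1 hk with rfl | hk
      · simp [hj]
      · simp [mem_singleton.1 hk]

lemma card_filter_forall_exists_ne_eq_le {ι : Type*} [Fintype ι] [DecidableEq ι] :
    #{t : Fin 4 → ι | ∀ i, ∃ j ≠ i, t j = t i} ≤ 16 * Fintype.card ι ^ 2 := by
  -- such a tuple takes at most two values, so it is fixed by them and the positions of the first
  let pattern : ι × ι × Finset (Fin 4) → Fin 4 → ι := fun p i => if i ∈ p.2.2 then p.1 else p.2.1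
  calc _ ≤ #(univ.image pattern) := card_le_card fun t ht => by
        have hcard : #(univ.image t) ≤ 2 := by
          have := two_mul_card_image_le t (mem_filter.1 ht).2
          rw [Fintype.card_fin] at this
          omega
        rw [mem_image]
        by_cases hconst : ∀ i, t i = t 0
        · exact ⟨(t 0, t 0, ∅), mem_univ _, funext fun i => by simp [pattern, hconst i]⟩
        obtain ⟨k, hk⟩ := not_forall.1 hconst
        refine ⟨(t 0, t k, ({i | t i = t 0} : Finset (Fin 4))), mem_univ _, funext fun i => ?_⟩
        by_cases hi : t i = t 0
        · simp [pattern, hi]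
        simp only [pattern, mem_filter_univ, hi, if_false]
        by_contra hik
        refine hcard.not_gt (two_lt_card.2 ⟨t 0, ?_, t i, ?_, t k, ?_, Ne.symm hi, Ne.symm hk,
          Ne.symm hik⟩) <;> exact mem_image_of_mem _ (mem_univ _)
    _ ≤ #(univ : Finset (ι × ι × Finset (Fin 4))) := card_image_le
    _ = 16 * Fintype.card ι ^ 2 := by simp [Fintype.card_finset]; ring

section

variable {Ω : Type*} {mΩ : MeasurableSpace Ω} {μ : Measure Ω}

lemma MeasureTheory.MemLp.integrable_pow_four {f : Ω → ℝ} (hf : MemLp f 4 μ) :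
    Integrable (fun ω => f ω ^ 4) μ := by
  simpa [Even.pow_abs ⟨2, rfl⟩] using hf.integrable_norm_pow (p := 4) four_ne_zero

lemma MeasureTheory.memLp_four_of_integrable_pow {f : Ω → ℝ} (hf : AEStronglyMeasurable f μ)
    (hf4 : Integrable (fun ω => f ω ^ 4) μ) : MemLp f 4 μ := by
  refine (integrable_norm_rpow_iff hf (by norm_num) (by norm_num)).1 ?_
  simpa [Even.pow_abs ⟨2, rfl⟩] using hf4

lemma integrable_sum_pow_four_div_four {f : Fin 4 → Ω → ℝ} (hf : ∀ i, MemLp (f i) 4 μ) :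
    Integrable (fun ω => (∑ i, f i ω ^ 4) / 4) μ :=
  (integrable_finsetSum _ fun i _ => (hf i).integrable_pow_four).div_const 4

lemma integrable_prod_fin_four {f : Fin 4 → Ω → ℝ} (hf : ∀ i, MemLp (f i) 4 μ) :
    Integrable (fun ω => ∏ i, f i ω) μ :=
  (integrable_sum_pow_four_div_four hf).mono'
    (Finset.aestronglyMeasurable_fun_prod _ fun i _ => (hf i).aestronglyMeasurable)
    (ae_of_all _ fun ω => abs_prod_fin_four_le fun i => f i ω)

lemma abs_integral_prod_fin_four_le {f : Fin 4 → Ω → ℝ} {K : ℝ} (hf : ∀ i, MemLp (f i) 4 μ)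
    (hK : ∀ i, ∫ ω, f i ω ^ 4 ∂μ ≤ K) : |∫ ω, ∏ i, f i ω ∂μ| ≤ K := by
  calc |∫ ω, ∏ i, f i ω ∂μ| ≤ ∫ ω, |∏ i, f i ω| ∂μ := abs_integral_le_integral_abs
    _ ≤ ∫ ω, (∑ i, f i ω ^ 4) / 4 ∂μ :=
      integral_mono (integrable_prod_fin_four hf).abs (integrable_sum_pow_four_div_four hf)
        fun ω => abs_prod_fin_four_le fun i => f i ω
    _ = (∑ i, ∫ ω, f i ω ^ 4 ∂μ) / 4 := by
      rw [integral_div, integral_finsetSum _ fun i _ => (hf i).integrable_pow_four]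
    _ ≤ K := by
      rw [Fin.sum_univ_four]; linarith [hK 0, hK 1, hK 2, hK 3]

lemma integral_add_pow_four_le {f g : Ω → ℝ} (hf : MemLp f 4 μ) (hg : MemLp g 4 μ) :
    ∫ ω, (f ω + g ω) ^ 4 ∂μ ≤ 8 * ∫ ω, f ω ^ 4 ∂μ + 8 * ∫ ω, g ω ^ 4 ∂μ := by
  have hf4 := hf.integrable_pow_four.const_mul 8
  have hg4 := hg.integrable_pow_four.const_mul 8
  rw [← integral_const_mul, ← integral_const_mul, ← integral_add hf4 hg4]
  exact integral_mono (hf.add hg).integrable_pow_four (hf4.add hg4) fun ω => add_pow_four_le _ _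

lemma integral_sub_pow_four_le {f g : Ω → ℝ} (hf : MemLp f 4 μ) (hg : MemLp g 4 μ) :
    ∫ ω, (f ω - g ω) ^ 4 ∂μ ≤ 8 * ∫ ω, f ω ^ 4 ∂μ + 8 * ∫ ω, g ω ^ 4 ∂μ := by
  simpa [← sub_eq_add_neg, Even.neg_pow ⟨2, rfl⟩] using integral_add_pow_four_le hf hg.neg

lemma integrable_mul_prod_fin_three {f : Ω → ℝ} {g : Fin 3 → Ω → ℝ} (hf : MemLp f 4 μ)
    (hg : ∀ i, MemLp (g i) 4 μ) : Integrable (fun ω => f ω * ∏ i, g i ω) μ := by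
  simpa [Fin.prod_univ_succ] using integrable_prod_fin_four (f := Fin.cons f g) (Fin.cases hf hg)

theorem integral_sum_pow_four_le {ι : Type*} [Fintype ι] [DecidableEq ι] {W : ι → Ω → ℝ} {K : ℝ}
    (hW : ∀ a, MemLp (W a) 4 μ)
    (horth : ∀ a (t : Fin 3 → ι), (∀ i, t i ≠ a) → ∫ ω, W a ω * ∏ i, W (t i) ω ∂μ = 0)
    (hK : ∀ a, ∫ ω, W a ω ^ 4 ∂μ ≤ K) :
    ∫ ω, (∑ a, W a ω) ^ 4 ∂μ ≤ 16 * K * Fintype.card ι ^ 2 := by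
  rcases isEmpty_or_nonempty ι with hι | ⟨⟨a₀⟩⟩
  · simp
  have hK₀ : 0 ≤ K := (integral_nonneg fun ω => by positivity).trans (hK a₀)
  have hsingle : ∀ t : Fin 4 → ι, ∫ ω, ∏ i, W (t i) ω ∂μ ≠ 0 → ∀ i, ∃ j ≠ i, t j = t i := by
    intro t ht i
    by_contra! hi
    refine ht ?_
    simp_rw [Fin.prod_univ_succAbove _ i]
    exact horth _ _ fun k => hi _ (Fin.succAbove_ne i k)
  set S : Finset (Fin 4 → ι) := {t | ∀ i, ∃ j ≠ i, t j = t i}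
  have hS : (#S : ℝ) ≤ 16 * Fintype.card ι ^ 2 := by
    exact_mod_cast card_filter_forall_exists_ne_eq_le
  calc ∫ ω, (∑ a, W a ω) ^ 4 ∂μ = ∑ t : Fin 4 → ι, ∫ ω, ∏ i, W (t i) ω ∂μ := by
        simp_rw [Fintype.sum_pow]
        exact integral_finsetSum _ fun t _ => integrable_prod_fin_four fun i => hW (t i)
    _ = ∑ t ∈ S, ∫ ω, ∏ i, W (t i) ω ∂μ :=
        (sum_filter_of_ne fun t _ => hsingle t).symm
    _ ≤ ∑ t ∈ S, K :=
        sum_le_sum fun t _ => (le_abs_self _).trans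
          (abs_integral_prod_fin_four_le (fun i => hW (t i)) fun i => hK (t i))
    _ ≤ 16 * K * Fintype.card ι ^ 2 := by
        rw [sum_const, nsmul_eq_mul]
        nlinarith

lemma ProbabilityTheory.Indep.integral_mul_eq_mul_integral_of_measurable
    {m₁ m₂ : MeasurableSpace Ω} (h : Indep m₁ m₂ μ) (hm₁ : m₁ ≤ mΩ) (hm₂ : m₂ ≤ mΩ)
    {f g : Ω → ℝ} (hf : Measurable[m₁] f) (hg : Measurable[m₂] g) :
    ∫ ω, f ω * g ω ∂μ = (∫ ω, f ω ∂μ) * ∫ ω, g ω ∂μ :=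
  ((IndepFun_iff_Indep f g μ).2 (indep_of_indep_of_le_right
    (indep_of_indep_of_le_left h hf.comap_le) hg.comap_le)).integral_fun_mul_eq_mul_integral
    (hf.mono hm₁ le_rfl).aestronglyMeasurable (hg.mono hm₂ le_rfl).aestronglyMeasurable

lemma ProbabilityTheory.Indep.integral_comp_eq_sum {α : Type*} [Fintype α] [MeasurableSpace α]
    [MeasurableSingletonClass α] {m₁ m₂ : MeasurableSpace Ω} (h : Indep m₁ m₂ μ)
    (hm₁ : m₁ ≤ mΩ) (hm₂ : m₂ ≤ mΩ) {X : Ω → α} (hX : Measurable[m₁] X) {g : α → Ω → ℝ}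
    (hg : ∀ a, Measurable[m₂] (g a)) (hgi : ∀ a, Integrable (g a) μ) :
    ∫ ω, g (X ω) ω ∂μ = ∑ a, μ.real (X ⁻¹' {a}) * ∫ ω, g a ω ∂μ := by
  have hXa : ∀ a, MeasurableSet[m₁] (X ⁻¹' {a}) := fun a => hX (measurableSet_singleton a)
  have hind : ∀ a, Measurable[m₁] ((X ⁻¹' {a}).indicator (1 : Ω → ℝ)) := fun a =>
    Measurable.indicator (m := m₁) measurable_const (hXa a)
  have hsplit : ∀ a ω, (X ⁻¹' {a}).indicator (g a) ω = (X ⁻¹' {a}).indicator 1 ω * g a ω :=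
    fun a ω => by by_cases hω : X ω = a <;> simp [hω]
  calc ∫ ω, g (X ω) ω ∂μ = ∫ ω, ∑ a, (X ⁻¹' {a}).indicator (g a) ω ∂μ := by
        congr 1 with ω
        rw [sum_eq_single (X ω) (fun a _ ha => by simp [Ne.symm ha]) (by simp)]
        simp
    _ = ∑ a, ∫ ω, (X ⁻¹' {a}).indicator (g a) ω ∂μ :=
        integral_finsetSum _ fun a _ => (hgi a).indicator (hm₁ _ (hXa a))
    _ = _ := sum_congr rfl fun a _ => by
        simp_rw [hsplit, h.integral_mul_eq_mul_integral_of_measurable hm₁ hm₂ (hind a) (hg a),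
          integral_indicator_one (hm₁ _ (hXa a))]

lemma ProbabilityTheory.iIndep.indep_iSup_compl_singleton {ι : Type*} {m : ι → MeasurableSpace Ω}
    (h_le : ∀ i, m i ≤ mΩ) (h : iIndep m μ) (i₀ : ι) :
    Indep (m i₀) (⨆ i ∈ ({i₀}ᶜ : Set ι), m i) μ := by
  simpa using indep_iSup_of_disjoint h_le h (disjoint_compl_right (a := ({i₀} : Set ι)))

lemma le_iSup_compl_singleton {ι α : Type*} [CompleteLattice α] (m : ι → α) {i i₀ : ι}
    (h : i ≠ i₀) : m i ≤ ⨆ k ∈ ({i₀}ᶜ : Set ι), m k :=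
  le_iSup₂ (f := fun k (_ : k ∈ ({i₀}ᶜ : Set ι)) => m k) i h

lemma Measurable.apply_of_countable {ι β : Type*} [Countable ι] [MeasurableSpace ι]
    [MeasurableSingletonClass ι] [MeasurableSpace β] {s : Ω → ι} {Y : ι → Ω → β}
    (hs : Measurable s) (hY : ∀ i, Measurable (Y i)) : Measurable fun ω => Y (s ω) ω :=
  (measurable_from_prod_countable_left (f := fun p : Ω × ι => Y p.2 p.1) hY).comp
    (measurable_id.prodMk hs)

variable {n : ℕ}

noncomputable def sampleMean (Y : Fin n → Ω → ℝ) (ω : Ω) : ℝ := (n : ℝ)⁻¹ * ∑ a, Y a ω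

def resample (Y : Fin n → Ω → ℝ) (s : Fin n → Ω → Fin n) (j : Fin n) (ω : Ω) : ℝ := Y (s j ω) ω

lemma memLp_sampleMean {p : ENNReal} {Y : Fin n → Ω → ℝ} (hY : ∀ a, MemLp (Y a) p μ) :
    MemLp (sampleMean Y) p μ :=
  (memLp_finsetSum _ fun a _ => hY a).const_mul _

lemma inv_mul_sum_le [NeZero n] {x : Fin n → ℝ} {M : ℝ} (h : ∀ a, x a ≤ M) :
    (n : ℝ)⁻¹ * ∑ a, x a ≤ M :=
  calc (n : ℝ)⁻¹ * ∑ a, x a ≤ (n : ℝ)⁻¹ * ∑ _a : Fin n, M := by gcongr with a; exact h a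
    _ = M := by simp [NeZero.ne]

lemma sum_sub_sampleMean (Y : Fin n → Ω → ℝ) (ω : Ω) : ∑ a, (Y a ω - sampleMean Y ω) = 0 := by
  rcases Nat.eq_zero_or_pos n with rfl | hn
  · simp
  simp [sum_sub_distrib, sampleMean, hn.ne']

lemma integral_sampleMean_pow_four_le [NeZero n] {Y : Fin n → Ω → ℝ} {M : ℝ}
    (hY : ∀ a, MemLp (Y a) 4 μ) (hM : ∀ a, ∫ ω, Y a ω ^ 4 ∂μ ≤ M) :
    ∫ ω, sampleMean Y ω ^ 4 ∂μ ≤ M := by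
  have hn : (n : ℝ) ≠ 0 := Nat.cast_ne_zero.2 (NeZero.ne n)
  have hjensen : ∀ ω, sampleMean Y ω ^ 4 ≤ (n : ℝ)⁻¹ * ∑ a, Y a ω ^ 4 := fun ω => by
    simpa [sampleMean, ← mul_sum, hn] using Real.pow_arith_mean_le_arith_mean_pow_of_even
      (s := univ) (fun _ => (n : ℝ)⁻¹) (fun a => Y a ω) (fun _ _ => by positivity) (by simp [hn])
      (n := 4) ⟨2, rfl⟩
  calc ∫ ω, sampleMean Y ω ^ 4 ∂μ ≤ ∫ ω, (n : ℝ)⁻¹ * ∑ a, Y a ω ^ 4 ∂μ :=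
        integral_mono (memLp_sampleMean hY).integrable_pow_four
          ((integrable_finsetSum _ fun a _ => (hY a).integrable_pow_four).const_mul _) hjensen
    _ = (n : ℝ)⁻¹ * ∑ a, ∫ ω, Y a ω ^ 4 ∂μ := by
        rw [integral_const_mul, integral_finsetSum _ fun a _ => (hY a).integrable_pow_four]
    _ ≤ M := inv_mul_sum_le hM

lemma integral_sampleMean_pow_four_le_div_sq {W : Fin n → Ω → ℝ} {K : ℝ}
    (hW : ∀ a, MemLp (W a) 4 μ)
    (horth : ∀ a (t : Fin 3 → Fin n), (∀ i, t i ≠ a) → ∫ ω, W a ω * ∏ i, W (t i) ω ∂μ = 0)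
    (hK : ∀ a, ∫ ω, W a ω ^ 4 ∂μ ≤ K) :
    ∫ ω, sampleMean W ω ^ 4 ∂μ ≤ 16 * K / n ^ 2 := by
  rcases Nat.eq_zero_or_pos n with rfl | hn
  · simp [sampleMean]
  have hsum := integral_sum_pow_four_le hW horth hK
  rw [Fintype.card_fin] at hsum
  simp_rw [sampleMean, mul_pow, integral_const_mul]
  calc ((n : ℝ)⁻¹) ^ 4 * ∫ ω, (∑ a, W a ω) ^ 4 ∂μ ≤ ((n : ℝ)⁻¹) ^ 4 * (16 * K * n ^ 2) := by
        gcongr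
    _ = 16 * K / n ^ 2 := by field_simp

structure IsBootstrap (μ : Measure Ω) (𝓕 : Fin n ⊕ Fin n → MeasurableSpace Ω)
    (s : Fin n → Ω → Fin n) (Y : Fin n → Ω → ℝ) : Prop where
  le : ∀ i, 𝓕 i ≤ mΩ
  iIndep : iIndep 𝓕 μ
  measurable_index : ∀ j, Measurable[𝓕 (.inl j)] (s j)
  measurable_sample : ∀ a, Measurable[𝓕 (.inr a)] (Y a)
  measure_index_eq : ∀ j a, μ {ω | s j ω = a} = 1 / n

namespace IsBootstrap

variable {𝓕 : Fin n ⊕ Fin n → MeasurableSpace Ω} {s : Fin n → Ω → Fin n} {Y : Fin n → Ω → ℝ}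

lemma memLp_resample (hB : IsBootstrap μ 𝓕 s Y) (hY : ∀ a, MemLp (Y a) 4 μ) (j : Fin n) :
    MemLp (resample Y s j) 4 μ := by
  refine (memLp_finsetSum univ fun a _ => (hY a).abs).mono ?_ (ae_of_all _ fun ω => ?_)
  · exact (((hB.measurable_index j).mono (hB.le _) le_rfl).apply_of_countable
      fun a => (hB.measurable_sample a).mono (hB.le _) le_rfl).aestronglyMeasurable
  · simp only [resample, Real.norm_eq_abs, Pi.abs_apply]
    rw [abs_of_nonneg (sum_nonneg fun a _ => abs_nonneg (Y a ω))]
    exact single_le_sum (f := fun a => |Y a ω|) (fun a _ => abs_nonneg _) (mem_univ _)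

lemma integral_resample (hB : IsBootstrap μ 𝓕 s Y) (j : Fin n) {g : Fin n → Ω → ℝ}
    (hg : ∀ a, Measurable[⨆ i ∈ ({.inl j}ᶜ : Set (Fin n ⊕ Fin n)), 𝓕 i] (g a))
    (hgi : ∀ a, Integrable (g a) μ) :
    ∫ ω, g (s j ω) ω ∂μ = (n : ℝ)⁻¹ * ∑ a, ∫ ω, g a ω ∂μ := by
  rw [(hB.iIndep.indep_iSup_compl_singleton hB.le (.inl j)).integral_comp_eq_sum (hB.le _)
    (iSup₂_le fun i _ => hB.le i) (hB.measurable_index j) hg hgi, mul_sum]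
  congr 1 with a
  simp [measureReal_def, Set.preimage, hB.measure_index_eq]

lemma measurable_sample_of_ne (hB : IsBootstrap μ 𝓕 s Y) {i₀ : Fin n ⊕ Fin n} {a : Fin n}
    (h : .inr a ≠ i₀) : Measurable[⨆ i ∈ ({i₀}ᶜ : Set (Fin n ⊕ Fin n)), 𝓕 i] (Y a) :=
  (hB.measurable_sample a).mono (le_iSup_compl_singleton 𝓕 h) le_rfl

lemma measurable_index_of_ne (hB : IsBootstrap μ 𝓕 s Y) {i₀ : Fin n ⊕ Fin n} {j : Fin n}
    (h : .inl j ≠ i₀) : Measurable[⨆ i ∈ ({i₀}ᶜ : Set (Fin n ⊕ Fin n)), 𝓕 i] (s j) :=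
  (hB.measurable_index j).mono (le_iSup_compl_singleton 𝓕 h) le_rfl

lemma integral_resample_pow_four (hB : IsBootstrap μ 𝓕 s Y) (hY : ∀ a, MemLp (Y a) 4 μ)
    (j : Fin n) : ∫ ω, resample Y s j ω ^ 4 ∂μ = (n : ℝ)⁻¹ * ∑ a, ∫ ω, Y a ω ^ 4 ∂μ :=
  hB.integral_resample j (g := fun a ω => Y a ω ^ 4)
    (fun _ => (hB.measurable_sample_of_ne Sum.inr_ne_inl).pow_const 4)
    fun a => (hY a).integrable_pow_four

lemma integral_resample_sub_sampleMean_pow_four_le [NeZero n] (hB : IsBootstrap μ 𝓕 s Y)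
    (hY : ∀ a, MemLp (Y a) 4 μ) {M : ℝ} (hM : ∀ a, ∫ ω, Y a ω ^ 4 ∂μ ≤ M) (j : Fin n) :
    ∫ ω, (resample Y s j ω - sampleMean Y ω) ^ 4 ∂μ ≤ 16 * M := by
  have hresample : ∫ ω, resample Y s j ω ^ 4 ∂μ ≤ M := by
    rw [hB.integral_resample_pow_four hY]
    exact inv_mul_sum_le hM
  have hmean := integral_sampleMean_pow_four_le hY hM
  linarith [integral_sub_pow_four_le (hB.memLp_resample hY j) (memLp_sampleMean hY)]

lemma integral_resample_sub_mul_prod_eq_zero (hB : IsBootstrap μ 𝓕 s Y)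
    (hY : ∀ a, MemLp (Y a) 4 μ) (j : Fin n) (t : Fin 3 → Fin n) (ht : ∀ i, t i ≠ j) :
    ∫ ω, (resample Y s j ω - sampleMean Y ω) *
      ∏ i, (resample Y s (t i) ω - sampleMean Y ω) ∂μ = 0 := by
  set 𝓖 := ⨆ i ∈ ({.inl j}ᶜ : Set (Fin n ⊕ Fin n)), 𝓕 i
  have hY𝓖 : ∀ a, Measurable[𝓖] (Y a) := fun a => hB.measurable_sample_of_ne Sum.inr_ne_inl
  have hmean : Measurable[𝓖] (sampleMean Y) :=
    (Finset.measurable_sum _ fun a _ => hY𝓖 a).const_mul _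
  set R : Ω → ℝ := fun ω => ∏ i, (resample Y s (t i) ω - sampleMean Y ω)
  have hR : Measurable[𝓖] R := Finset.measurable_prod _ fun i _ =>
    ((hB.measurable_index_of_ne (by simpa using ht i)).apply_of_countable hY𝓖).sub hmean
  have hint : ∀ a, Integrable (fun ω => (Y a ω - sampleMean Y ω) * R ω) μ := fun a =>
    integrable_mul_prod_fin_three ((hY a).sub (memLp_sampleMean hY))
      fun i => (hB.memLp_resample hY _).sub (memLp_sampleMean hY)
  calc _ = ∫ ω, (fun a ω => (Y a ω - sampleMean Y ω) * R ω) (s j ω) ω ∂μ := rfl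
    _ = (n : ℝ)⁻¹ * ∑ a, ∫ ω, (Y a ω - sampleMean Y ω) * R ω ∂μ :=
        hB.integral_resample j (fun a => ((hY𝓖 a).sub hmean).mul hR) hint
    _ = 0 := by
        simp_rw [← integral_finsetSum _ fun a _ => hint a, ← sum_mul, sum_sub_sampleMean]
        simp

lemma integral_sample_sub_mul_prod_eq_zero [IsProbabilityMeasure μ] (hB : IsBootstrap μ 𝓕 s Y)
    (hY : ∀ a, MemLp (Y a) 4 μ) {c : ℝ} (hc : ∀ a, ∫ ω, Y a ω ∂μ = c) (a : Fin n)
    (t : Fin 3 → Fin n) (ht : ∀ i, t i ≠ a) :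
    ∫ ω, (Y a ω - c) * ∏ i, (Y (t i) ω - c) ∂μ = 0 := by
  have hindep := hB.iIndep.indep_iSup_compl_singleton hB.le (.inr a)
  rw [hindep.integral_mul_eq_mul_integral_of_measurable (hB.le _) (iSup₂_le fun i _ => hB.le i)
    ((hB.measurable_sample a).sub_const c) (Finset.measurable_prod _ fun i _ =>
      (hB.measurable_sample_of_ne (by simpa using ht i)).sub_const c),
    integral_sub ((hY a).integrable (by norm_num)) (integrable_const c), hc]
  simp

theorem integral_sampleMean_resample_sub_pow_four_le [IsProbabilityMeasure μ] [NeZero n]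
    (hB : IsBootstrap μ 𝓕 s Y) (hY : ∀ a, MemLp (Y a) 4 μ) {c M : ℝ}
    (hc : ∀ a, ∫ ω, Y a ω ∂μ = c) (hM : ∀ a, ∫ ω, Y a ω ^ 4 ∂μ ≤ M) :
    ∫ ω, (sampleMean (resample Y s) ω - c) ^ 4 ∂μ ≤ 1024 * (3 * M + c ^ 4) / n ^ 2 := by
  set U : Fin n → Ω → ℝ := fun j ω => resample Y s j ω - sampleMean Y ω
  set W : Fin n → Ω → ℝ := fun a ω => Y a ω - c
  have hU : ∀ j, MemLp (U j) 4 μ := fun j => (hB.memLp_resample hY j).sub (memLp_sampleMean hY)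
  have hW : ∀ a, MemLp (W a) 4 μ := fun a => (hY a).sub (memLp_const c)
  have hdecomp : ∀ ω, sampleMean (resample Y s) ω - c = sampleMean U ω + sampleMean W ω := by
    intro ω
    simp only [U, W, sampleMean, sum_sub_distrib, sum_const, card_univ, Fintype.card_fin,
      nsmul_eq_mul]
    field_simp [NeZero.ne n]
    ring
  have hU4 : ∫ ω, sampleMean U ω ^ 4 ∂μ ≤ 16 * (16 * M) / n ^ 2 :=
    integral_sampleMean_pow_four_le_div_sq hU (hB.integral_resample_sub_mul_prod_eq_zero hY)
      (hB.integral_resample_sub_sampleMean_pow_four_le hY hM)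
  have hW4 : ∫ ω, sampleMean W ω ^ 4 ∂μ ≤ 16 * (8 * M + 8 * c ^ 4) / n ^ 2 :=
    integral_sampleMean_pow_four_le_div_sq hW (hB.integral_sample_sub_mul_prod_eq_zero hY hc)
      fun a => (integral_sub_pow_four_le (hY a) (memLp_const c)).trans (by simp [hM a])
  calc ∫ ω, (sampleMean (resample Y s) ω - c) ^ 4 ∂μ
      = ∫ ω, (sampleMean U ω + sampleMean W ω) ^ 4 ∂μ := by simp_rw [hdecomp]
    _ ≤ 8 * ∫ ω, sampleMean U ω ^ 4 ∂μ + 8 * ∫ ω, sampleMean W ω ^ 4 ∂μ :=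
        integral_add_pow_four_le (memLp_sampleMean hU) (memLp_sampleMean hW)
    _ ≤ 8 * (16 * (16 * M) / n ^ 2) + 8 * (16 * (8 * M + 8 * c ^ 4) / n ^ 2) := by gcongr
    _ = 1024 * (3 * M + c ^ 4) / n ^ 2 := by ring

end IsBootstrap

end

/-- The fourth central moment of the bootstrap `h`-th sample moment about the
true moment is `O(1/m²)`.  `Z 0, Z 1, …` is an i.i.d. sequence with finite raw
moments `α k = E[Z^k]` for `k ≤ 4h`; for each sample size `m`, the resampling
is encoded by uniform random indices `σ m j : Ω → Fin m`, jointly independent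
of each other and of the sample.  Then
`E[(X̂_m − α h)⁴] = O(m⁻²)` where `X̂_m = (1/m) ∑_{j<m} (Z*_j)^h`. -/
theorem bootstrap_moment_fourth_central
    {Ω : Type*} [MeasureSpace Ω] [IsProbabilityMeasure (ℙ : Measure Ω)]
    (h : ℕ) (α : ℕ → ℝ)
    (Z : ℕ → Ω → ℝ) (σ : (m : ℕ) → Fin m → Ω → Fin m)
    (hZmeas : ∀ n, Measurable (Z n))
    (hσmeas : ∀ m j, Measurable (σ m j))
    (hZint : ∀ n k, k ≤ 4 * h → Integrable (fun ω => (Z n ω) ^ k) ℙ)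
    (hZmom : ∀ n k, k ≤ 4 * h → ∫ ω, (Z n ω) ^ k ∂ℙ = α k)
    (hσunif : ∀ m (j k : Fin m), ℙ {ω | σ m j ω = k} = 1 / m)
    (hindep : ∀ m : ℕ, iIndepFun
      (β := fun t : Fin m ⊕ Fin m => Sum.elim (fun _ : Fin m => Fin m) (fun _ : Fin m => ℝ) t)
      (m := fun t => by cases t <;> simp only [Sum.elim_inl, Sum.elim_inr] <;> infer_instance)
      (fun t => match t with
        | Sum.inl j => σ m j
        | Sum.inr j => Z (j : ℕ)) ℙ) :
    ∃ C : ℝ, ∀ m : ℕ, 0 < m →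
      |∫ ω, ((1 / (m : ℝ)) * ∑ j : Fin m, (Z (σ m j ω) ω) ^ h - α h) ^ 4 ∂ℙ|
        ≤ C / (m : ℝ) ^ 2 := by
  refine ⟨1024 * (3 * α (4 * h) + α h ^ 4), fun m hm => ?_⟩
  have : NeZero m := ⟨hm.ne'⟩
  have hpow : ∀ x : ℝ, (x ^ h) ^ 4 = x ^ (4 * h) := fun x => by rw [← pow_mul, mul_comm]
  have hB : IsBootstrap ℙ (Sum.elim (fun j => MeasurableSpace.comap (σ m j) inferInstance)
      fun a : Fin m => MeasurableSpace.comap (Z a) inferInstance) (σ m) fun a ω => Z a ω ^ h :=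
    { le := fun i => by cases i with
        | inl j => exact (hσmeas m j).comap_le
        | inr a => exact (hZmeas a).comap_le
      iIndep := by
        have := (iIndepFun_iff_iIndep _ _ _).1 (hindep m)
        convert this using 2 with i
        cases i <;> rfl
      measurable_index := fun j => comap_measurable (σ m j)
      measurable_sample := fun a => (comap_measurable (Z a)).pow_const h
      measure_index_eq := hσunif m }
  have hY : ∀ a : Fin m, MemLp (fun ω => Z a ω ^ h) 4 ℙ := fun a =>
    memLp_four_of_integrable_pow ((hZmeas a).pow_const h).aestronglyMeasurable
      (by simpa only [hpow] using hZint a (4 * h) le_rfl)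
  have hc : ∀ a : Fin m, ∫ ω, Z a ω ^ h ∂ℙ = α h := fun a => hZmom a h (by omega)
  have hM : ∀ a : Fin m, ∫ ω, (Z a ω ^ h) ^ 4 ∂ℙ ≤ α (4 * h) := fun a => by
    simp only [hpow, hZmom a (4 * h) le_rfl, le_refl]
  rw [abs_of_nonneg (integral_nonneg fun ω => by positivity)]
  simpa only [sampleMean, resample, one_div] using
    hB.integral_sampleMean_resample_sub_pow_four_le hY hc hM
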